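/- Let P and Q be Borel probability measures on complete separable metric spaces, let β > 0, and suppose γ* is a coupling of P and Q attaining the (finite) infimum defining the entropic optimal transport cost W_β(P, Q) = inf_γ { ∫ ρ(x, x') dγ(x, x') + β·KL(γ ‖ P ⊗ Q) }. Then supp(γ*) = supp(P) × supp(Q). -/

import Mathlib

open MeasureTheory
open scoped ENNReal

noncomputable section

/-- A coupling of `P` and `Q`: a probability measure on the product whose marginals
are `P` and `Q`. -/
def IsCoupling {X X' : Type*} [MeasurableSpace X] [MeasurableSpace X']
    (γ : Measure (X × X')) (P : Measure X) (Q : Measure X') : Prop :=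
  IsProbabilityMeasure γ ∧ γ.map Prod.fst = P ∧ γ.map Prod.snd = Q

open Classical in
/-- Kullback–Leibler divergence (relative entropy) of `μ` with respect to `ν`. -/
def KLdiv {α : Type*} [MeasurableSpace α] (μ ν : Measure α) : ℝ≥0∞ :=
  if μ ≪ ν ∧ Integrable (llr μ ν) μ then ENNReal.ofReal (∫ x, llr μ ν x ∂μ) else ⊤

/-- Entropic optimal transport objective `F(γ) = ∫ ρ dγ + β·KL(γ ‖ P ⊗ Q)`. -/
def entOTObj {X : Type*} [MeasurableSpace X] [PseudoMetricSpace X] (β : ℝ)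
    (P Q : Measure X) (γ : Measure (X × X)) : ℝ≥0∞ :=
  (∫⁻ p, edist p.1 p.2 ∂γ) + ENNReal.ofReal β * KLdiv γ (P.prod Q)

/-- Entropic optimal transport cost `W_β(P,Q)`. -/
def Wbeta {X : Type*} [MeasurableSpace X] [PseudoMetricSpace X] (β : ℝ)
    (P Q : Measure X) : ℝ≥0∞ :=
  ⨅ γ ∈ {γ : Measure (X × X) | IsCoupling γ P Q}, entOTObj β P Q γ

/-- Support of a Borel measure on a topological space: the set of points all of whose
open neighborhoods have positive measure. -/
def msupp {X : Type*} [TopologicalSpace X] [MeasurableSpace X] (μ : Measure X) : Set X :=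
  {x | ∀ U : Set X, IsOpen U → x ∈ U → 0 < μ U}

/-!
Suppose `γ*` gives no mass to a product of balls `U × V` with `P U > 0` and `Q V > 0`. Moving a
small amount of mass of `γ*` from `U × Vᶜ` and `Uᶜ × V` onto the product of the swapped marginals
produces a coupling `Γ` of finite cost and finite entropy that charges `U × V`, a set on which the
density of `γ*` with respect to `P ⊗ Q` vanishes. Along `(1 - t) γ* + t Γ` the cost is linear,
and by convexity of `x log x` the entropy is at most its linear interpolation minus
`t log (1 / t) Γ(U × V)`, because on the zero set of the density
`(t v) log (t v) = t (v log v) - t log (1 / t) v`.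
Since `t log (1 / t) ≫ t` as `t → 0`, the objective falls below its minimum.
-/

open Set Real InformationTheory ProbabilityTheory

section KullbackLeibler

variable {α : Type*} [MeasurableSpace α]

lemma KLdiv_eq_klDiv {μ ν : Measure α} (h : μ univ = ν univ) : KLdiv μ ν = klDiv μ ν := by
  rw [KLdiv, klDiv_def, measureReal_def, measureReal_def, h, add_sub_cancel_right]

lemma klFun_two_mul_le {u : ℝ} (hu : 0 ≤ u) : klFun (2 * u) ≤ 2 * klFun u + 2 * u := by
  rcases hu.eq_or_lt with rfl | hu
  · simp [klFun_zero]
  have hlog2 : log 2 ≤ 1 := by linarith [log_le_sub_one_of_pos (zero_lt_two' ℝ)]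
  rw [klFun_apply, klFun_apply, log_mul two_ne_zero hu.ne']
  nlinarith

lemma klFun_le_of_le_add {u v M : ℝ} (hu : 0 ≤ u) (hv : 0 ≤ v) (hM : 0 ≤ M) (h : v ≤ u + M) :
    klFun v ≤ klFun u + u + (1 + klFun (2 * M)) := by
  have hmax : klFun v ≤ max (klFun 0) (klFun (u + M)) :=
    convexOn_klFun.le_max_of_mem_Icc self_mem_Ici (by simp; positivity) ⟨hv, h⟩
  have hmid : klFun (u + M) ≤ (1 / 2) * klFun (2 * u) + (1 / 2) * klFun (2 * M) := by
    have := convexOn_klFun.2 (mem_Ici.2 (by positivity : 0 ≤ 2 * u))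
      (mem_Ici.2 (by positivity : 0 ≤ 2 * M)) (by norm_num : (0 : ℝ) ≤ 1 / 2)
      (by norm_num : (0 : ℝ) ≤ 1 / 2) (by norm_num)
    simp only [smul_eq_mul] at this
    rwa [show 1 / 2 * (2 * u) + 1 / 2 * (2 * M) = u + M by ring] at this
  rw [klFun_zero] at hmax
  linarith [max_le_add_of_nonneg zero_le_one (klFun_nonneg (by positivity : 0 ≤ u + M)),
    klFun_two_mul_le hu, klFun_nonneg (by positivity : 0 ≤ 2 * M)]

lemma klFun_mix_add_le {u v t : ℝ} (hu : 0 ≤ u) (hv : 0 ≤ v) (ht0 : 0 < t) (ht1 : t ≤ 1) :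
    klFun ((1 - t) * u + t * v) + (if u = 0 then t * -log t * v else 0)
      ≤ (1 - t) * klFun u + t * klFun v := by
  split_ifs with hu0
  · subst hu0
    rcases hv.eq_or_lt with rfl | hv
    · simp [klFun_zero]
    simp only [klFun_apply, mul_zero, zero_add, log_zero, sub_zero, log_mul ht0.ne' hv.ne']
    linarith
  · rw [add_zero]
    exact convexOn_klFun.2 hu hv (by linarith) ht0.le (by ring)

lemma rnDeriv_le_rnDeriv_of_le {μ ν ξ : Measure α} [SigmaFinite ξ] [ν.HaveLebesgueDecomposition ξ]
    (hν : ν ≪ ξ) (h : μ ≤ ν) : μ.rnDeriv ξ ≤ᵐ[ξ] ν.rnDeriv ξ :=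
  ae_le_of_forall_setLIntegral_le_of_sigmaFinite (Measure.measurable_rnDeriv _ _) fun s _ _ =>
    (Measure.setLIntegral_rnDeriv_le s).trans ((h s).trans (Measure.setLIntegral_rnDeriv hν s).ge)

lemma rnDeriv_le_add_of_le_add_smul {μ ν ξ : Measure α} [IsFiniteMeasure ν] [IsFiniteMeasure ξ]
    {M : ℝ≥0∞} (hM : M ≠ ∞) (hν : ν ≪ ξ) (hle : μ ≤ ν + M • ξ) :
    ∀ᵐ x ∂ξ, μ.rnDeriv ξ x ≤ ν.rnDeriv ξ x + M := by
  have := ξ.smul_finite hM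
  have hac : ν + M • ξ ≪ ξ := hν.add_left (Measure.AbsolutelyContinuous.rfl.smul_left M)
  filter_upwards [rnDeriv_le_rnDeriv_of_le hac hle, Measure.rnDeriv_add' ν (M • ξ) ξ,
    Measure.rnDeriv_smul_left_of_ne_top' ξ ξ hM, Measure.rnDeriv_self ξ] with x h1 h2 h3 h4
  simpa [h2, h3, h4] using h1

lemma klDiv_ne_top_of_le_add_smul {μ ν ξ : Measure α} [IsFiniteMeasure μ] [IsFiniteMeasure ν]
    [IsFiniteMeasure ξ] {M : ℝ≥0∞} (hM : M ≠ ∞) (hle : μ ≤ ν + M • ξ) (hν : klDiv ν ξ ≠ ∞) :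
    klDiv μ ξ ≠ ∞ := by
  have hνξ : ν ≪ ξ := (klDiv_ne_top_iff.1 hν).1
  have hμξ : μ ≪ ξ := (Measure.absolutelyContinuous_of_le hle).trans
    (hνξ.add_left (Measure.AbsolutelyContinuous.rfl.smul_left M))
  set C := 1 + klFun (2 * M.toReal)
  have hbound : ∀ᵐ x ∂ξ, ENNReal.ofReal (klFun (μ.rnDeriv ξ x).toReal)
      ≤ ENNReal.ofReal (klFun (ν.rnDeriv ξ x).toReal) + ν.rnDeriv ξ x + ENNReal.ofReal C := by
    filter_upwards [rnDeriv_le_add_of_le_add_smul hM hνξ hle, Measure.rnDeriv_lt_top ν ξ]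
      with x hx hfin
    have hle' : (μ.rnDeriv ξ x).toReal ≤ (ν.rnDeriv ξ x).toReal + M.toReal := by
      rw [← ENNReal.toReal_add hfin.ne hM]
      exact ENNReal.toReal_mono (ENNReal.add_ne_top.2 ⟨hfin.ne, hM⟩) hx
    have := klFun_le_of_le_add ENNReal.toReal_nonneg ENNReal.toReal_nonneg
      ENNReal.toReal_nonneg hle'
    calc ENNReal.ofReal (klFun (μ.rnDeriv ξ x).toReal)
        ≤ ENNReal.ofReal (klFun (ν.rnDeriv ξ x).toReal + (ν.rnDeriv ξ x).toReal + C) :=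
          ENNReal.ofReal_le_ofReal this
      _ = _ := by
        rw [ENNReal.ofReal_add (add_nonneg (klFun_nonneg ENNReal.toReal_nonneg)
            ENNReal.toReal_nonneg) (add_nonneg zero_le_one (klFun_nonneg (by positivity))),
          ENNReal.ofReal_add (klFun_nonneg ENNReal.toReal_nonneg) ENNReal.toReal_nonneg,
          ENNReal.ofReal_toReal hfin.ne]
  rw [klDiv_eq_lintegral_klFun_of_ac hμξ]
  rw [klDiv_eq_lintegral_klFun_of_ac hνξ] at hν
  refine ne_top_of_le_ne_top ?_ (lintegral_mono_ae hbound)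
  rw [lintegral_add_right _ measurable_const,
    lintegral_add_right _ (Measure.measurable_rnDeriv _ _), lintegral_const]
  exact ENNReal.add_ne_top.2 ⟨ENNReal.add_ne_top.2 ⟨hν,
    ne_top_of_le_ne_top (measure_ne_top ν univ) (Measure.lintegral_rnDeriv_le)⟩,
    ENNReal.mul_ne_top ENNReal.ofReal_ne_top (measure_ne_top ξ univ)⟩

lemma ofReal_klFun_mix_add_le {f g : ℝ≥0∞} (hf : f ≠ ∞) (hg : g ≠ ∞) {t : ℝ} (ht0 : 0 < t)
    (ht1 : t ≤ 1) :
    ENNReal.ofReal (klFun (ENNReal.ofReal (1 - t) * f + ENNReal.ofReal t * g).toReal)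
        + (if f = 0 then ENNReal.ofReal (t * -log t) * g else 0)
      ≤ ENNReal.ofReal (1 - t) * ENNReal.ofReal (klFun f.toReal)
        + ENNReal.ofReal t * ENNReal.ofReal (klFun g.toReal) := by
  have key := klFun_mix_add_le ENNReal.toReal_nonneg ENNReal.toReal_nonneg ht0 ht1
    (u := f.toReal) (v := g.toReal)
  have h1t : 0 ≤ 1 - t := sub_nonneg.2 ht1
  have hlog : 0 ≤ t * -log t := mul_nonneg ht0.le (neg_nonneg.2 (log_nonpos ht0.le ht1))
  rw [ENNReal.toReal_add (ENNReal.mul_ne_top ENNReal.ofReal_ne_top hf)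
      (ENNReal.mul_ne_top ENNReal.ofReal_ne_top hg), ENNReal.toReal_mul, ENNReal.toReal_mul,
    ENNReal.toReal_ofReal h1t, ENNReal.toReal_ofReal ht0.le,
    ← ENNReal.ofReal_mul h1t, ← ENNReal.ofReal_mul ht0.le,
    ← ENNReal.ofReal_add (mul_nonneg h1t (klFun_nonneg ENNReal.toReal_nonneg))
      (mul_nonneg ht0.le (klFun_nonneg ENNReal.toReal_nonneg))]
  have hH : 0 ≤ klFun ((1 - t) * f.toReal + t * g.toReal) := klFun_nonneg (by positivity)
  by_cases hf0 : f = 0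
  · have hgain : ENNReal.ofReal (t * -log t) * g = ENNReal.ofReal (t * -log t * g.toReal) := by
      rw [ENNReal.ofReal_mul hlog, ENNReal.ofReal_toReal hg]
    rw [if_pos hf0, hgain, ← ENNReal.ofReal_add hH (mul_nonneg hlog ENNReal.toReal_nonneg)]
    rw [if_pos (by simp [hf0])] at key
    exact ENNReal.ofReal_le_ofReal key
  · rw [if_neg hf0, add_zero]
    rw [if_neg (by simp [ENNReal.toReal_eq_zero_iff, hf0, hf]), add_zero] at key
    exact ENNReal.ofReal_le_ofReal key

lemma klDiv_mix_add_le {μ ν ξ : Measure α} [IsFiniteMeasure μ] [IsFiniteMeasure ν]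
    [IsFiniteMeasure ξ] (hμ : μ ≪ ξ) (hν : ν ≪ ξ) {t : ℝ} (ht0 : 0 < t) (ht1 : t ≤ 1) :
    klDiv (ENNReal.ofReal (1 - t) • μ + ENNReal.ofReal t • ν) ξ
        + ENNReal.ofReal (t * -log t) * ν {x | μ.rnDeriv ξ x = 0}
      ≤ ENNReal.ofReal (1 - t) * klDiv μ ξ + ENNReal.ofReal t * klDiv ν ξ := by
  set S := {x | μ.rnDeriv ξ x = 0}
  have hS : MeasurableSet S := Measure.measurable_rnDeriv μ ξ (measurableSet_singleton 0)
  have hmix : ENNReal.ofReal (1 - t) • μ + ENNReal.ofReal t • ν ≪ ξ :=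
    (hμ.smul_left _).add_left (hν.smul_left _)
  have := μ.smul_finite (ENNReal.ofReal_ne_top (r := 1 - t))
  have := ν.smul_finite (ENNReal.ofReal_ne_top (r := t))
  rw [klDiv_eq_lintegral_klFun_of_ac hmix, klDiv_eq_lintegral_klFun_of_ac hμ,
    klDiv_eq_lintegral_klFun_of_ac hν, ← Measure.setLIntegral_rnDeriv hν S,
    ← lintegral_indicator hS, ← lintegral_const_mul' _ _ ENNReal.ofReal_ne_top,
    ← lintegral_const_mul' _ _ ENNReal.ofReal_ne_top,
    ← lintegral_const_mul' _ _ ENNReal.ofReal_ne_top, ← lintegral_add_left (by fun_prop),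
    ← lintegral_add_left (by fun_prop)]
  refine lintegral_mono_ae ?_
  filter_upwards [Measure.rnDeriv_add' (ENNReal.ofReal (1 - t) • μ) (ENNReal.ofReal t • ν) ξ,
    Measure.rnDeriv_smul_left_of_ne_top' μ ξ ENNReal.ofReal_ne_top,
    Measure.rnDeriv_smul_left_of_ne_top' ν ξ ENNReal.ofReal_ne_top,
    Measure.rnDeriv_lt_top μ ξ, Measure.rnDeriv_lt_top ν ξ] with x hadd hμx hνx hf hg
  rw [hadd, Pi.add_apply, hμx, hνx, Pi.smul_apply, Pi.smul_apply, smul_eq_mul, smul_eq_mul]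
  convert ofReal_klFun_mix_add_le hf.ne hg.ne ht0 ht1 using 2
  simp only [indicator_apply, S, mem_ofPred_eq, mul_ite, mul_zero]

lemma measure_le_measure_rnDeriv_eq_zero {μ ν ξ : Measure α} (hν : ν ≪ ξ) {N : Set α}
    (hN : MeasurableSet N) (hμN : μ N = 0) : ν N ≤ ν {x | μ.rnDeriv ξ x = 0} := by
  have hzero : ∀ᵐ x ∂ξ, x ∈ N → μ.rnDeriv ξ x = 0 :=
    (setLIntegral_eq_zero_iff hN (Measure.measurable_rnDeriv μ ξ)).1
      (le_antisymm ((Measure.setLIntegral_rnDeriv_le N).trans hμN.le) bot_le)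
  exact measure_mono_ae (hν.ae_le hzero)

end KullbackLeibler

section Coupling

variable {X Y : Type*} [MeasurableSpace X] [MeasurableSpace Y]

lemma IsCoupling.mix {γ Γ : Measure (X × Y)} {P : Measure X} {Q : Measure Y}
    (hγ : IsCoupling γ P Q) (hΓ : IsCoupling Γ P Q) {t : ℝ} (ht0 : 0 ≤ t) (ht1 : t ≤ 1) :
    IsCoupling (ENNReal.ofReal (1 - t) • γ + ENNReal.ofReal t • Γ) P Q := by
  obtain ⟨hγp, hγ1, hγ2⟩ := hγ
  obtain ⟨hΓp, hΓ1, hΓ2⟩ := hΓ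
  have hst : ENNReal.ofReal (1 - t) + ENNReal.ofReal t = 1 := by
    rw [← ENNReal.ofReal_add (sub_nonneg.2 ht1) ht0, sub_add_cancel, ENNReal.ofReal_one]
  refine ⟨⟨by simp [hst]⟩, ?_, ?_⟩
  · rw [Measure.map_add _ _ measurable_fst, Measure.map_smul, Measure.map_smul, hγ1, hΓ1,
      ← add_smul, hst, one_smul]
  · rw [Measure.map_add _ _ measurable_snd, Measure.map_smul, Measure.map_smul, hγ2, hΓ2,
      ← add_smul, hst, one_smul]

lemma IsCoupling.KLdiv_prod_eq_klDiv {γ : Measure (X × Y)} {P : Measure X} {Q : Measure Y}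
    [IsProbabilityMeasure P] [IsProbabilityMeasure Q] (hγ : IsCoupling γ P Q) :
    KLdiv γ (P.prod Q) = klDiv γ (P.prod Q) := by
  have := hγ.1
  exact KLdiv_eq_klDiv (by simp)

lemma IsCoupling.msupp_subset [TopologicalSpace X] [TopologicalSpace Y] [OpensMeasurableSpace X]
    [OpensMeasurableSpace Y] {γ : Measure (X × Y)} {P : Measure X} {Q : Measure Y}
    (hγ : IsCoupling γ P Q) : msupp γ ⊆ msupp P ×ˢ msupp Q := by
  rintro ⟨x, y⟩ hxy
  refine ⟨fun U hU hxU => ?_, fun V hV hyV => ?_⟩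
  · rw [← hγ.2.1, Measure.map_apply measurable_fst hU.measurableSet, ← prod_univ]
    exact hxy _ (hU.prod isOpen_univ) ⟨hxU, trivial⟩
  · rw [← hγ.2.2, Measure.map_apply measurable_snd hV.measurableSet, ← univ_prod]
    exact hxy _ (isOpen_univ.prod hV) ⟨trivial, hyV⟩

lemma IsCoupling.of_map_eq {γ Γ : Measure (X × Y)} {P : Measure X} {Q : Measure Y}
    (hγ : IsCoupling γ P Q) (h1 : Γ.map Prod.fst = γ.map Prod.fst)
    (h2 : Γ.map Prod.snd = γ.map Prod.snd) : IsCoupling Γ P Q := by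
  have := hγ.1
  have : IsProbabilityMeasure (Γ.map Prod.fst) :=
    h1 ▸ Measure.isProbabilityMeasure_map (by fun_prop)
  exact ⟨Measure.isProbabilityMeasure_of_map Prod.fst, h1.trans hγ.2.1, h2.trans hγ.2.2⟩

lemma IsCoupling.measure_prod_compl_of_null {γ : Measure (X × Y)} {P : Measure X}
    {Q : Measure Y} (hγ : IsCoupling γ P Q) {U : Set X} {V : Set Y} (hU : MeasurableSet U)
    (hN : γ (U ×ˢ V) = 0) : γ (U ×ˢ Vᶜ) = P U := by
  have hset : U ×ˢ Vᶜ = U ×ˢ univ \ U ×ˢ V := by ext; simp; tauto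
  rw [hset, measure_sdiff_null hN, prod_univ, ← Measure.map_apply measurable_fst hU, hγ.2.1]

lemma IsCoupling.measure_compl_prod_of_null {γ : Measure (X × Y)} {P : Measure X}
    {Q : Measure Y} (hγ : IsCoupling γ P Q) {U : Set X} {V : Set Y} (hV : MeasurableSet V)
    (hN : γ (U ×ˢ V) = 0) : γ (Uᶜ ×ˢ V) = Q V := by
  have hset : Uᶜ ×ˢ V = univ ×ˢ V \ U ×ˢ V := by ext; simp; tauto
  rw [hset, measure_sdiff_null hN, univ_prod, ← Measure.map_apply measurable_snd hV, hγ.2.2]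

lemma lintegral_cond_ne_top_of_le_add {Z : Type*} [MeasurableSpace Z] {γ : Measure Z}
    [IsFiniteMeasure γ] {E : Set Z} (hE : MeasurableSet E) (hE0 : γ E ≠ 0) {f g : Z → ℝ≥0∞}
    {K : ℝ≥0∞} (hK : K ≠ ∞) (hfg : ∀ p ∈ E, f p ≤ g p + K) (hg : ∫⁻ p, g p ∂γ ≠ ∞) :
    ∫⁻ p, f p ∂γ[|E] ≠ ∞ := by
  rw [ProbabilityTheory.cond, lintegral_smul_measure]
  refine ENNReal.mul_ne_top (ENNReal.inv_ne_top.2 hE0) (ne_top_of_le_ne_top ?_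
    (setLIntegral_mono' hE hfg))
  rw [lintegral_add_right _ measurable_const, setLIntegral_const]
  exact ENNReal.add_ne_top.2 ⟨ne_top_of_le_ne_top hg (setLIntegral_le_lintegral E g),
    ENNReal.mul_ne_top hK (measure_ne_top γ E)⟩

def crossProd (α β : Measure (X × Y)) : Measure (X × Y) :=
  (α.map Prod.fst).prod (β.map Prod.snd) + (β.map Prod.fst).prod (α.map Prod.snd)

variable {α β : Measure (X × Y)}

lemma map_fst_crossProd [IsProbabilityMeasure α] [IsProbabilityMeasure β] :
    (crossProd α β).map Prod.fst = α.map Prod.fst + β.map Prod.fst := by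
  have := Measure.isProbabilityMeasure_map (μ := α) measurable_snd.aemeasurable
  have := Measure.isProbabilityMeasure_map (μ := β) measurable_snd.aemeasurable
  simp [crossProd, Measure.map_add _ _ measurable_fst]

lemma map_snd_crossProd [IsProbabilityMeasure α] [IsProbabilityMeasure β] :
    (crossProd α β).map Prod.snd = α.map Prod.snd + β.map Prod.snd := by
  have := Measure.isProbabilityMeasure_map (μ := α) measurable_fst.aemeasurable
  have := Measure.isProbabilityMeasure_map (μ := β) measurable_fst.aemeasurable
  simp [crossProd, Measure.map_add _ _ measurable_snd, add_comm]

lemma crossProd_le_smul_prod {γ : Measure (X × Y)} [IsFiniteMeasure γ] {a b : ℝ≥0∞}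
    (hα : α ≤ a • γ) (hβ : β ≤ b • γ) :
    crossProd α β ≤ (2 * (a * b)) • (γ.map Prod.fst).prod (γ.map Prod.snd) := by
  have h1 := fun {a : ℝ≥0∞} {μ : Measure (X × Y)} (h : μ ≤ a • γ) =>
    (Measure.map_mono h measurable_fst).trans_eq (Measure.map_smul a γ Prod.fst)
  have h2 := fun {a : ℝ≥0∞} {μ : Measure (X × Y)} (h : μ ≤ a • γ) =>
    (Measure.map_mono h measurable_snd).trans_eq (Measure.map_smul a γ Prod.snd)
  calc crossProd α β
      ≤ (a • γ.map Prod.fst).prod (b • γ.map Prod.snd)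
        + (b • γ.map Prod.fst).prod (a • γ.map Prod.snd) :=
        add_le_add (Measure.prod_mono (h1 hα) (h2 hβ)) (Measure.prod_mono (h1 hβ) (h2 hα))
    _ = _ := by
      simp only [Measure.prod_smul_left, Measure.prod_smul_right, smul_smul, ← add_smul]
      ring_nf

lemma map_fst_add_smul_crossProd (R : Measure (X × Y)) [IsProbabilityMeasure α]
    [IsProbabilityMeasure β] (a b c : ℝ≥0∞) :
    (R + a • α + b • β + c • crossProd α β).map Prod.fst
      = (R + (a + c) • α + (b + c) • β).map Prod.fst := by
  simp only [Measure.map_add _ _ measurable_fst, Measure.map_smul, map_fst_crossProd, add_smul,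
    smul_add]
  abel

lemma map_snd_add_smul_crossProd (R : Measure (X × Y)) [IsProbabilityMeasure α]
    [IsProbabilityMeasure β] (a b c : ℝ≥0∞) :
    (R + a • α + b • β + c • crossProd α β).map Prod.snd
      = (R + (a + c) • α + (b + c) • β).map Prod.snd := by
  simp only [Measure.map_add _ _ measurable_snd, Measure.map_smul, map_snd_crossProd, add_smul,
    smul_add]
  abel

lemma smul_cond_eq_restrict (γ : Measure (X × Y)) {E : Set (X × Y)} (hE : γ E ≠ ∞) :
    γ E • γ[|E] = γ.restrict E := by
  rcases eq_or_ne (γ E) 0 with h0 | h0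
  · simp [h0, Measure.restrict_eq_zero.2 h0]
  · rw [ProbabilityTheory.cond, smul_smul, ENNReal.mul_inv_cancel h0 hE, one_smul]

lemma eq_restrict_compl_add_smul_cond (γ : Measure (X × Y)) [IsFiniteMeasure γ]
    {E E' : Set (X × Y)} (hE : MeasurableSet E) (hE' : MeasurableSet E') (hdisj : Disjoint E E') :
    γ = γ.restrict (E ∪ E')ᶜ + γ E • γ[|E] + γ E' • γ[|E'] := by
  rw [smul_cond_eq_restrict γ (measure_ne_top γ E), smul_cond_eq_restrict γ (measure_ne_top γ E'),
    add_assoc, ← Measure.restrict_union hdisj hE', add_comm,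
    Measure.restrict_add_restrict_compl (hE.union hE')]

/-- By `eq_restrict_compl_add_smul_cond`, this moves mass `c` of `γ` from each of the conditional
pieces `γ[|E]` and `γ[|E']` onto their `crossProd`. -/
def crossSwap (γ : Measure (X × Y)) (E E' : Set (X × Y)) (c : ℝ≥0∞) : Measure (X × Y) :=
  γ.restrict (E ∪ E')ᶜ + (γ E - c) • γ[|E] + (γ E' - c) • γ[|E'] + c • crossProd γ[|E] γ[|E']

variable {γ : Measure (X × Y)} {E E' : Set (X × Y)} {c : ℝ≥0∞}

lemma map_fst_crossSwap [IsFiniteMeasure γ] (hE : MeasurableSet E) (hE' : MeasurableSet E')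
    (hdisj : Disjoint E E') (hE0 : γ E ≠ 0) (hE'0 : γ E' ≠ 0) (hcE : c ≤ γ E) (hcE' : c ≤ γ E') :
    (crossSwap γ E E' c).map Prod.fst = γ.map Prod.fst := by
  have := cond_isProbabilityMeasure hE0
  have := cond_isProbabilityMeasure hE'0
  rw [crossSwap, map_fst_add_smul_crossProd, tsub_add_cancel_of_le hcE,
    tsub_add_cancel_of_le hcE', ← eq_restrict_compl_add_smul_cond γ hE hE' hdisj]

lemma map_snd_crossSwap [IsFiniteMeasure γ] (hE : MeasurableSet E) (hE' : MeasurableSet E')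
    (hdisj : Disjoint E E') (hE0 : γ E ≠ 0) (hE'0 : γ E' ≠ 0) (hcE : c ≤ γ E) (hcE' : c ≤ γ E') :
    (crossSwap γ E E' c).map Prod.snd = γ.map Prod.snd := by
  have := cond_isProbabilityMeasure hE0
  have := cond_isProbabilityMeasure hE'0
  rw [crossSwap, map_snd_add_smul_crossProd, tsub_add_cancel_of_le hcE,
    tsub_add_cancel_of_le hcE', ← eq_restrict_compl_add_smul_cond γ hE hE' hdisj]

lemma crossSwap_le [IsFiniteMeasure γ] (hE : MeasurableSet E) (hE' : MeasurableSet E')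
    (hdisj : Disjoint E E') : crossSwap γ E E' c ≤ γ + c • crossProd γ[|E] γ[|E'] := by
  calc crossSwap γ E E' c
      ≤ γ.restrict (E ∪ E')ᶜ + γ E • γ[|E] + γ E' • γ[|E'] + c • crossProd γ[|E] γ[|E'] := by
        refine Measure.le_iff'.2 fun s => ?_
        simp only [crossSwap, Measure.add_apply, Measure.smul_apply, smul_eq_mul]
        gcongr <;> exact tsub_le_self
    _ = _ := by rw [← eq_restrict_compl_add_smul_cond γ hE hE' hdisj]

lemma smul_crossProd_le_crossSwap : c • crossProd γ[|E] γ[|E'] ≤ crossSwap γ E E' c :=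
  Measure.le_add_left le_rfl

lemma crossSwap_le_add_smul_prod [IsFiniteMeasure γ] (hE : MeasurableSet E)
    (hE' : MeasurableSet E') (hdisj : Disjoint E E') :
    crossSwap γ E E' c
      ≤ γ + (c * (2 * ((γ E)⁻¹ * (γ E')⁻¹))) • (γ.map Prod.fst).prod (γ.map Prod.snd) := by
  have hcond : ∀ F : Set (X × Y), γ[|F] ≤ (γ F)⁻¹ • γ := fun F => by
    rw [ProbabilityTheory.cond]
    gcongr
    exact Measure.restrict_le_self
  rw [mul_smul]
  exact (crossSwap_le hE hE' hdisj).trans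
    (by gcongr; exact crossProd_le_smul_prod (hcond E) (hcond E'))

lemma crossSwap_prod_ne_zero [IsFiniteMeasure γ] {U : Set X} {V : Set Y} (hEU : E ⊆ U ×ˢ univ)
    (hE'V : E' ⊆ univ ×ˢ V) (hE0 : γ E ≠ 0) (hE'0 : γ E' ≠ 0) (hc0 : c ≠ 0) :
    crossSwap γ E E' c (U ×ˢ V) ≠ 0 := by
  have := cond_isProbabilityMeasure (μ := γ) hE0
  have := cond_isProbabilityMeasure (μ := γ) hE'0
  have hfst : 1 ≤ (γ[|E].map Prod.fst) U := calc
    1 = γ[|E] E := (cond_apply_self hE0 (measure_ne_top γ E)).symm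
    _ ≤ γ[|E] (Prod.fst ⁻¹' U) := measure_mono fun p hp => (hEU hp).1
    _ ≤ _ := Measure.le_map_apply measurable_fst.aemeasurable U
  have hsnd : 1 ≤ (γ[|E'].map Prod.snd) V := calc
    1 = γ[|E'] E' := (cond_apply_self hE'0 (measure_ne_top γ E')).symm
    _ ≤ γ[|E'] (Prod.snd ⁻¹' V) := measure_mono fun p hp => (hE'V hp).2
    _ ≤ _ := Measure.le_map_apply measurable_snd.aemeasurable V
  have hc : c ≤ crossSwap γ E E' c (U ×ˢ V) := calc
    c = c * (1 * 1) := by rw [mul_one, mul_one]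
    _ ≤ c * ((γ[|E].map Prod.fst).prod (γ[|E'].map Prod.snd) (U ×ˢ V)) := by
      rw [Measure.prod_prod]
      gcongr
    _ ≤ (c • crossProd γ[|E] γ[|E']) (U ×ˢ V) := by
      rw [Measure.smul_apply, smul_eq_mul, crossProd, Measure.add_apply]
      gcongr
      exact le_self_add
    _ ≤ _ := smul_crossProd_le_crossSwap _
  exact ((pos_iff_ne_zero.2 hc0).trans_le hc).ne'

end Coupling

section Cost

open Metric

variable {X : Type*} [PseudoMetricSpace X]

lemma edist_add_edist_le_of_mem_ball {x y u v : X} {r : ℝ} (h : u ∈ ball x r ∨ v ∈ ball y r) :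
    edist u x + edist x v ≤ edist u v + 2 * (ENNReal.ofReal r + edist x y) := by
  have hball : ∀ {a b : X}, a ∈ ball b r → edist a b ≤ ENNReal.ofReal r := fun h =>
    (edist_lt_ofReal.2 h).le
  rcases h with hu | hv
  · calc edist u x + edist x v ≤ edist u x + (edist x u + edist u v) := by
          gcongr; exact edist_triangle _ _ _
      _ ≤ ENNReal.ofReal r + (ENNReal.ofReal r + edist u v) := by
          rw [edist_comm x u]; gcongr <;> exact hball hu
      _ = edist u v + 2 * ENNReal.ofReal r := by ring
      _ ≤ _ := by gcongr; exact le_self_add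
  · calc edist u x + edist x v ≤ (edist u v + edist v y + edist y x) + (edist x y + edist y v) := by
          gcongr
          · exact edist_triangle4 _ _ _ _
          · exact edist_triangle _ _ _
      _ ≤ (edist u v + ENNReal.ofReal r + edist x y) + (edist x y + ENNReal.ofReal r) := by
          rw [edist_comm y x, edist_comm y v]; gcongr <;> exact hball hv
      _ = _ := by ring

variable [MeasurableSpace X] [BorelSpace X]

lemma lintegral_edist_le_of_map_eq {μ ν : Measure (X × X)} (h1 : μ.map Prod.fst = ν.map Prod.fst)
    (h2 : μ.map Prod.snd = ν.map Prod.snd) (z : X) :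
    ∫⁻ p, edist p.1 p.2 ∂μ ≤ ∫⁻ p, (edist p.1 z + edist z p.2) ∂ν := by
  have hmarg : ∀ ρ : Measure (X × X), ∫⁻ p, (edist p.1 z + edist z p.2) ∂ρ
      = ∫⁻ u, edist u z ∂(ρ.map Prod.fst) + ∫⁻ v, edist z v ∂(ρ.map Prod.snd) := fun ρ => by
    rw [lintegral_add_left (by fun_prop), lintegral_map (by fun_prop) measurable_fst,
      lintegral_map (by fun_prop) measurable_snd]
  calc ∫⁻ p, edist p.1 p.2 ∂μ ≤ ∫⁻ p, (edist p.1 z + edist z p.2) ∂μ :=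
        lintegral_mono fun p => edist_triangle _ _ _
    _ = _ := by rw [hmarg, hmarg, h1, h2]

lemma lintegral_edist_crossSwap_ne_top {γ : Measure (X × X)} [IsFiniteMeasure γ]
    {E E' : Set (X × X)} {c : ℝ≥0∞} {x y : X} {r : ℝ} (hE : MeasurableSet E)
    (hE' : MeasurableSet E') (hdisj : Disjoint E E') (hEU : E ⊆ ball x r ×ˢ univ)
    (hE'V : E' ⊆ univ ×ˢ ball y r) (hE0 : γ E ≠ 0) (hE'0 : γ E' ≠ 0) (hc : c ≠ ∞)
    (hcost : ∫⁻ p, edist p.1 p.2 ∂γ ≠ ∞) :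
    ∫⁻ p, edist p.1 p.2 ∂(crossSwap γ E E' c) ≠ ∞ := by
  have := cond_isProbabilityMeasure (μ := γ) hE0
  have := cond_isProbabilityMeasure (μ := γ) hE'0
  have hK : 2 * (ENNReal.ofReal r + edist x y) ≠ ∞ := by finiteness
  have hcross : ∫⁻ p, edist p.1 p.2 ∂(crossProd γ[|E] γ[|E']) ≠ ∞ := by
    refine ne_top_of_le_ne_top ?_ (lintegral_edist_le_of_map_eq (ν := γ[|E] + γ[|E'])
      (by rw [map_fst_crossProd, Measure.map_add _ _ measurable_fst])
      (by rw [map_snd_crossProd, Measure.map_add _ _ measurable_snd]) x)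
    rw [lintegral_add_measure]
    exact ENNReal.add_ne_top.2
      ⟨lintegral_cond_ne_top_of_le_add hE hE0 hK
        (fun p hp => edist_add_edist_le_of_mem_ball (Or.inl (hEU hp).1)) hcost,
      lintegral_cond_ne_top_of_le_add hE' hE'0 hK
        (fun p hp => edist_add_edist_le_of_mem_ball (Or.inr (hE'V hp).2)) hcost⟩
  refine ne_top_of_le_ne_top ?_ (lintegral_mono' (crossSwap_le hE hE' hdisj) le_rfl)
  rw [lintegral_add_measure, lintegral_smul_measure]
  exact ENNReal.add_ne_top.2 ⟨hcost, ENNReal.mul_ne_top hc hcross⟩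

lemma IsCoupling.exists_isCoupling_ne_zero_of_null {P Q : Measure X} [IsProbabilityMeasure Q]
    {γ : Measure (X × X)} (hγ : IsCoupling γ P Q) (hcost : ∫⁻ p, edist p.1 p.2 ∂γ ≠ ∞)
    {x y : X} {r : ℝ} (hN : γ (ball x r ×ˢ ball y r) = 0) (hP : P (ball x r) ≠ 0)
    (hQ : Q (ball y r) ≠ 0) :
    ∃ Γ, IsCoupling Γ P Q ∧ (∃ M ≠ ∞, Γ ≤ γ + M • P.prod Q) ∧
      ∫⁻ p, edist p.1 p.2 ∂Γ ≠ ∞ ∧ Γ (ball x r ×ˢ ball y r) ≠ 0 := by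
  have := hγ.1
  set E := ball x r ×ˢ (ball y r)ᶜ
  set E' := (ball x r)ᶜ ×ˢ ball y r
  have hE : MeasurableSet E := measurableSet_ball.prod measurableSet_ball.compl
  have hE' : MeasurableSet E' := measurableSet_ball.compl.prod measurableSet_ball
  have hdisj : Disjoint E E' := disjoint_left.2 fun p hp hp' => hp'.1 hp.1
  have hEU : E ⊆ ball x r ×ˢ univ := fun p hp => ⟨hp.1, trivial⟩
  have hE'V : E' ⊆ univ ×ˢ ball y r := fun p hp => ⟨trivial, hp.2⟩
  have hE0 : γ E ≠ 0 := hγ.measure_prod_compl_of_null measurableSet_ball hN ▸ hP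
  have hE'0 : γ E' ≠ 0 := hγ.measure_compl_prod_of_null measurableSet_ball hN ▸ hQ
  set c := min (γ E) (γ E')
  have hc0 : c ≠ 0 := by simp [c, hE0, hE'0]
  have hcT : c ≠ ∞ := ne_top_of_le_ne_top (measure_ne_top γ E) (min_le_left _ _)
  refine ⟨crossSwap γ E E' c, hγ.of_map_eq ?_ ?_, ⟨c * (2 * ((γ E)⁻¹ * (γ E')⁻¹)), ?_, ?_⟩,
    lintegral_edist_crossSwap_ne_top hE hE' hdisj hEU hE'V hE0 hE'0 hcT hcost,
    crossSwap_prod_ne_zero hEU hE'V hE0 hE'0 hc0⟩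
  · exact map_fst_crossSwap hE hE' hdisj hE0 hE'0 (min_le_left _ _) (min_le_right _ _)
  · exact map_snd_crossSwap hE hE' hdisj hE0 hE'0 (min_le_left _ _) (min_le_right _ _)
  · exact ENNReal.mul_ne_top hcT (ENNReal.mul_ne_top ENNReal.ofNat_ne_top
      (ENNReal.mul_ne_top (ENNReal.inv_ne_top.2 hE0) (ENNReal.inv_ne_top.2 hE'0)))
  · rw [← hγ.2.1, ← hγ.2.2]
    exact crossSwap_le_add_smul_prod hE hE' hdisj

end Cost

section Objective

variable {X : Type*} [PseudoMetricSpace X] [MeasurableSpace X]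

lemma entOTObj_ne_top_iff {β : ℝ} (hβ : 0 < β) {P Q : Measure X} {γ : Measure (X × X)} :
    entOTObj β P Q γ ≠ ∞ ↔ ∫⁻ p, edist p.1 p.2 ∂γ ≠ ∞ ∧ KLdiv γ (P.prod Q) ≠ ∞ := by
  simp [entOTObj, ENNReal.mul_eq_top, hβ]

lemma entOTObj_mix_add_le {β : ℝ} {P Q : Measure X} [IsProbabilityMeasure P]
    [IsProbabilityMeasure Q] {γ Γ : Measure (X × X)} (hγ : IsCoupling γ P Q)
    (hΓ : IsCoupling Γ P Q) (hγac : γ ≪ P.prod Q) (hΓac : Γ ≪ P.prod Q) {t : ℝ} (ht0 : 0 < t)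
    (ht1 : t ≤ 1) :
    entOTObj β P Q (ENNReal.ofReal (1 - t) • γ + ENNReal.ofReal t • Γ)
        + ENNReal.ofReal β * (ENNReal.ofReal (t * -log t) * Γ {p | γ.rnDeriv (P.prod Q) p = 0})
      ≤ ENNReal.ofReal (1 - t) * entOTObj β P Q γ + ENNReal.ofReal t * entOTObj β P Q Γ := by
  have := hγ.1
  have := hΓ.1
  have hKL := klDiv_mix_add_le hγac hΓac ht0 ht1
  simp only [entOTObj]
  rw [(hγ.mix hΓ ht0.le ht1).KLdiv_prod_eq_klDiv, hγ.KLdiv_prod_eq_klDiv, hΓ.KLdiv_prod_eq_klDiv,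
    lintegral_add_measure, lintegral_smul_measure, lintegral_smul_measure]
  calc _ = ENNReal.ofReal (1 - t) * ∫⁻ p, edist p.1 p.2 ∂γ
          + ENNReal.ofReal t * ∫⁻ p, edist p.1 p.2 ∂Γ
          + ENNReal.ofReal β * (klDiv (ENNReal.ofReal (1 - t) • γ + ENNReal.ofReal t • Γ)
              (P.prod Q) + ENNReal.ofReal (t * -log t) * Γ {p | γ.rnDeriv (P.prod Q) p = 0}) := by
        ring
    _ ≤ ENNReal.ofReal (1 - t) * ∫⁻ p, edist p.1 p.2 ∂γ
          + ENNReal.ofReal t * ∫⁻ p, edist p.1 p.2 ∂Γ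
          + ENNReal.ofReal β * (ENNReal.ofReal (1 - t) * klDiv γ (P.prod Q)
              + ENNReal.ofReal t * klDiv Γ (P.prod Q)) := by gcongr
    _ = _ := by ring

lemma exists_mix_lt_add_mul_neg_log {w o b m : ℝ≥0∞} (hw : w ≠ ∞) (ho : o ≠ ∞) (hb0 : b ≠ 0)
    (hb : b ≠ ∞) (hm0 : m ≠ 0) (hm : m ≠ ∞) :
    ∃ t : ℝ, 0 < t ∧ t ≤ 1 ∧ ENNReal.ofReal (1 - t) * w + ENNReal.ofReal t * o
      < w + b * (ENNReal.ofReal (t * -log t) * m) := by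
  have hbm : 0 < b.toReal * m.toReal :=
    mul_pos (ENNReal.toReal_pos hb0 hb) (ENNReal.toReal_pos hm0 hm)
  set L := o.toReal / (b.toReal * m.toReal) + 1
  have hL : 0 ≤ L := by positivity
  have hLbm : b.toReal * (L * m.toReal) = o.toReal + b.toReal * m.toReal := by
    rw [show b.toReal * (L * m.toReal) = b.toReal * m.toReal * L by ring, mul_add,
      mul_div_cancel₀ _ hbm.ne', mul_one]
  set t := exp (-L)
  have ht0 : 0 < t := exp_pos _
  have ht1 : t ≤ 1 := exp_le_one_iff.2 (neg_nonpos.2 hL)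
  have htlog : -log t = L := by simp [t]
  clear_value t
  refine ⟨t, ht0, ht1, ?_⟩
  rw [htlog, ← ENNReal.toReal_lt_toReal (by finiteness) (by finiteness),
    ENNReal.toReal_add (by finiteness) (by finiteness),
    ENNReal.toReal_add (by finiteness) (by finiteness), ENNReal.toReal_mul, ENNReal.toReal_mul,
    ENNReal.toReal_mul, ENNReal.toReal_mul, ENNReal.toReal_ofReal (sub_nonneg.2 ht1),
    ENNReal.toReal_ofReal ht0.le, ENNReal.toReal_ofReal (mul_nonneg ht0.le hL)]
  nlinarith [ENNReal.toReal_nonneg (a := w), mul_pos ht0 hbm]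

lemma exists_isCoupling_entOTObj_lt {β : ℝ} (hβ : 0 < β) {P Q : Measure X}
    [IsProbabilityMeasure P] [IsProbabilityMeasure Q] {γ Γ : Measure (X × X)}
    (hγ : IsCoupling γ P Q) (hΓ : IsCoupling Γ P Q) (hγobj : entOTObj β P Q γ ≠ ∞)
    (hΓobj : entOTObj β P Q Γ ≠ ∞) (hgain : Γ {p | γ.rnDeriv (P.prod Q) p = 0} ≠ 0) :
    ∃ γ', IsCoupling γ' P Q ∧ entOTObj β P Q γ' < entOTObj β P Q γ := by
  have hac : ∀ {μ : Measure (X × X)}, IsCoupling μ P Q → entOTObj β P Q μ ≠ ∞ → μ ≪ P.prod Q :=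
    fun hμ hobj => (klDiv_ne_top_iff.1 (hμ.KLdiv_prod_eq_klDiv ▸
      ((entOTObj_ne_top_iff hβ).1 hobj).2)).1
  have := hΓ.1
  obtain ⟨t, ht0, ht1, hlt⟩ := exists_mix_lt_add_mul_neg_log hγobj hΓobj
    (ENNReal.ofReal_pos.2 hβ).ne' ENNReal.ofReal_ne_top hgain (measure_ne_top Γ _)
  exact ⟨_, hγ.mix hΓ ht0.le ht1, lt_of_add_lt_add_right
    ((entOTObj_mix_add_le hγ hΓ (hac hγ hγobj) (hac hΓ hΓobj) ht0 ht1).trans_lt hlt)⟩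

end Objective

theorem entOT_plan_support_general {X : Type*} [MetricSpace X] [MeasurableSpace X] [BorelSpace X]
    (β : ℝ) (hβ : 0 < β)
    (P Q : Measure X) [IsProbabilityMeasure P] [IsProbabilityMeasure Q]
    (hfin : Wbeta β P Q < ⊤)
    (γstar : Measure (X × X)) (hc : IsCoupling γstar P Q)
    (hopt : entOTObj β P Q γstar = Wbeta β P Q) :
    msupp γstar = (msupp P) ×ˢ (msupp Q) := by
  refine hc.msupp_subset.antisymm ?_
  rintro ⟨x, y⟩ ⟨hx, hy⟩ W hW hxyW
  obtain ⟨r, hr, hrW⟩ := Metric.isOpen_iff.1 hW (x, y) hxyW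
  rw [← ball_prod_same] at hrW
  refine pos_iff_ne_zero.2 fun hW0 => ?_
  have hN := measure_mono_null hrW hW0
  have hobj : entOTObj β P Q γstar ≠ ∞ := hopt ▸ hfin.ne
  obtain ⟨hcost, hKL⟩ := (entOTObj_ne_top_iff hβ).1 hobj
  rw [hc.KLdiv_prod_eq_klDiv] at hKL
  obtain ⟨Γ, hΓ, ⟨M, hM, hΓle⟩, hΓcost, hΓN⟩ := hc.exists_isCoupling_ne_zero_of_null hcost hN
    (hx _ Metric.isOpen_ball (Metric.mem_ball_self hr)).ne'
    (hy _ Metric.isOpen_ball (Metric.mem_ball_self hr)).ne'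
  have := hc.1
  have := hΓ.1
  have hΓKL : klDiv Γ (P.prod Q) ≠ ∞ := klDiv_ne_top_of_le_add_smul hM hΓle hKL
  have hgain := measure_le_measure_rnDeriv_eq_zero (klDiv_ne_top_iff.1 hΓKL).1
    (measurableSet_ball.prod measurableSet_ball) hN
  obtain ⟨γ', hγ', hlt⟩ := exists_isCoupling_entOTObj_lt hβ hc hΓ hobj
    ((entOTObj_ne_top_iff hβ).2 ⟨hΓcost, hΓ.KLdiv_prod_eq_klDiv ▸ hΓKL⟩)
    (pos_iff_ne_zero.1 ((pos_iff_ne_zero.2 hΓN).trans_le hgain))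
  rw [hopt, Wbeta] at hlt
  exact hlt.not_ge (biInf_le _ hγ')

/-- For `β > 0` on a complete separable metric space, any coupling attaining the (finite)
entropic optimal transport cost has full support `supp(γ*) = supp(P) × supp(Q)`. -/
theorem entOT_plan_support {X : Type*} [MetricSpace X] [CompleteSpace X]
    [TopologicalSpace.SeparableSpace X] [MeasurableSpace X] [BorelSpace X]
    (β : ℝ) (hβ : 0 < β)
    (P Q : Measure X) [IsProbabilityMeasure P] [IsProbabilityMeasure Q]
    (hfin : Wbeta β P Q < ⊤)
    (γstar : Measure (X × X)) (hc : IsCoupling γstar P Q)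
    (hopt : entOTObj β P Q γstar = Wbeta β P Q) :
    msupp γstar = (msupp P) ×ˢ (msupp Q) :=
  entOT_plan_support_general β hβ P Q hfin γstar hc hopt

end
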